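/- There exists a universal constant C > 0 such that for all real numbers r, L with 0 < r ≤ L, every orthogonal 3×3 real matrix Q and every b ∈ ℝ³, the Lebesgue measure of the symmetric difference C(r, L) Δ (Q C(r, L) + b) is at most C r L (|b| + L ‖Q − I‖), where C(r, L) = { x ∈ ℝ³ : 0 ≤ x₁ ≤ L, x₂² + x₃² ≤ r² }, Q C(r,L) + b = { Q x + b : x ∈ C(r, L) }, and ‖·‖ denotes the operator norm on 3×3 matrices. -/

import Mathlib

open MeasureTheory Set Matrix

/-- Euclidean norm on `ℝ³` (realized as `Fin 3 → ℝ`). -/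
noncomputable def enorm3 (x : Fin 3 → ℝ) : ℝ := Real.sqrt (∑ i, x i ^ 2)

/-- The (Euclidean) operator norm of a `3 × 3` real matrix. -/
noncomputable def opNorm3 (A : Matrix (Fin 3) (Fin 3) ℝ) : ℝ :=
  ‖(Matrix.toEuclideanCLM (𝕜 := ℝ) A : EuclideanSpace ℝ (Fin 3) →L[ℝ] EuclideanSpace ℝ (Fin 3))‖

/-- The standard solid cylinder (fibre) of radius `r` and length `L` in `ℝ³`,
with axis along the first coordinate axis. -/
def cyl (r L : ℝ) : Set (Fin 3 → ℝ) :=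
  {x | 0 ≤ x 0 ∧ x 0 ≤ L ∧ x 1 ^ 2 + x 2 ^ 2 ≤ r ^ 2}

/-! The rigid motion `φ x = Q x + b` preserves volume, so `|A ∆ φ A| = 2 |φ A \ A|` for
`A = C(r, L)`. Every point of `A` is moved by at most `d = |b| + 2 L ‖Q - I‖`, hence `φ A` lies in
the cylinder `A` thickened by `d`, whose excess volume `π ((r + d)² (L + 2d) - r² L)` is at most
`11 π r L d` when `d ≤ r`. When `d > r` the trivial bound `|φ A \ A| ≤ |A| = π r² L` suffices. -/

open Real

theorem measure_symmDiff_eq_two_mul_sdiff {α : Type*} [MeasurableSpace α] {μ : Measure α}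
    {s t : Set α} (hs : NullMeasurableSet s μ) (ht : NullMeasurableSet t μ) (h : μ s = μ t)
    (hfin : μ s ≠ ⊤) : μ (symmDiff s t) = 2 * μ (t \ s) := by
  rw [measure_symmDiff_eq hs ht,
    measure_sdiff_symm hs ht h (measure_inter_ne_top_of_left_ne_top hfin), two_mul]

section RigidMotion

variable {ι : Type*} [Fintype ι] [DecidableEq ι] {Q : Matrix ι ι ℝ}

lemma abs_det_eq_one_of_transpose_mul_self (hQ : Qᵀ * Q = 1) : |Q.det| = 1 := by
  have h : Q.det * Q.det = 1 := by simpa [det_mul, det_transpose] using congrArg det hQ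
  rcases mul_self_eq_one_iff.mp h with h | h <;> simp [h]

lemma volume_image_mulVec_add (hQ : Qᵀ * Q = 1) (b : ι → ℝ) (s : Set (ι → ℝ)) :
    volume ((fun x => Q *ᵥ x + b) '' s) = volume s := by
  rw [show (fun x => Q *ᵥ x + b) = (· + b) ∘ toLin' Q from rfl, image_comp,
    image_add_right, measure_preimage_add_right, Measure.addHaar_image_linearMap,
    LinearMap.det_toLin', abs_det_eq_one_of_transpose_mul_self hQ, ENNReal.ofReal_one, one_mul]

lemma MeasurableSet.image_mulVec_add (hQ : Qᵀ * Q = 1) (b : ι → ℝ) {s : Set (ι → ℝ)}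
    (hs : MeasurableSet s) : MeasurableSet ((fun x => Q *ᵥ x + b) '' s) := by
  refine hs.image_of_continuousOn_injOn (by fun_prop) fun x _ y _ hxy => ?_
  simpa [mulVec_mulVec, hQ] using congrArg (Qᵀ *ᵥ ·) (add_right_cancel hxy)

end RigidMotion

def disc (ρ : ℝ) : Set (Fin 2 → ℝ) := {y | y 0 ^ 2 + y 1 ^ 2 ≤ ρ ^ 2}

def cylIcc (a b ρ : ℝ) : Set (Fin 3 → ℝ) :=
  {x | a ≤ x 0 ∧ x 0 ≤ b ∧ x 1 ^ 2 + x 2 ^ 2 ≤ ρ ^ 2}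

lemma cyl_eq_cylIcc (r L : ℝ) : cyl r L = cylIcc 0 L r := rfl

lemma disc_eq_preimage_closedBall {ρ : ℝ} (hρ : 0 ≤ ρ) :
    disc ρ = WithLp.toLp 2 ⁻¹' Metric.closedBall (0 : EuclideanSpace ℝ (Fin 2)) ρ := by
  ext y
  simp [disc, EuclideanSpace.norm_eq, Fin.sum_univ_two, sqrt_le_left, hρ]

lemma volume_disc {ρ : ℝ} (hρ : 0 ≤ ρ) : volume (disc ρ) = ENNReal.ofReal (π * ρ ^ 2) := by
  rw [disc_eq_preimage_closedBall hρ, (PiLp.volume_preserving_toLp (Fin 2)).measure_preimage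
      measurableSet_closedBall.nullMeasurableSet, EuclideanSpace.volume_closedBall_fin_two,
    ← ENNReal.ofReal_pow hρ, ← ENNReal.ofReal_mul (by positivity), mul_comm]

lemma measurableSet_disc (ρ : ℝ) : MeasurableSet (disc ρ) :=
  measurableSet_le (by fun_prop) measurable_const

lemma cylIcc_eq_preimage (a b ρ : ℝ) :
    cylIcc a b ρ =
      MeasurableEquiv.piFinSuccAbove (fun _ : Fin 3 => ℝ) 0 ⁻¹' Icc a b ×ˢ disc ρ := by
  ext x
  simp [cylIcc, disc, and_assoc, Fin.tail]

lemma measurableSet_cylIcc (a b ρ : ℝ) : MeasurableSet (cylIcc a b ρ) := by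
  rw [cylIcc_eq_preimage]
  exact (measurableSet_Icc.prod (measurableSet_disc ρ)).preimage
    (MeasurableEquiv.measurable _)

lemma volume_cylIcc (a b : ℝ) {ρ : ℝ} (hρ : 0 ≤ ρ) :
    volume (cylIcc a b ρ) = ENNReal.ofReal (π * ρ ^ 2 * (b - a)) := by
  rw [cylIcc_eq_preimage,
    (volume_preserving_piFinSuccAbove (fun _ : Fin 3 => ℝ) 0).measure_preimage
      (measurableSet_Icc.prod (measurableSet_disc ρ)).nullMeasurableSet,
    Measure.volume_eq_prod, Measure.prod_prod, Real.volume_Icc, volume_disc hρ,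
    mul_comm, ← ENNReal.ofReal_mul (by positivity)]

lemma enorm3_eq_norm (x : Fin 3 → ℝ) : enorm3 x = ‖WithLp.toLp 2 x‖ := by
  simp [enorm3, EuclideanSpace.norm_eq]

lemma enorm3_nonneg (x : Fin 3 → ℝ) : 0 ≤ enorm3 x := sqrt_nonneg _

lemma sq_enorm3 (x : Fin 3 → ℝ) : enorm3 x ^ 2 = x 0 ^ 2 + x 1 ^ 2 + x 2 ^ 2 := by
  rw [enorm3, sq_sqrt (by positivity), Fin.sum_univ_three]

lemma enorm3_add_le (x y : Fin 3 → ℝ) : enorm3 (x + y) ≤ enorm3 x + enorm3 y := by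
  simpa only [enorm3_eq_norm, WithLp.toLp_add] using norm_add_le _ _

lemma enorm3_mulVec_le (A : Matrix (Fin 3) (Fin 3) ℝ) (x : Fin 3 → ℝ) :
    enorm3 (A *ᵥ x) ≤ opNorm3 A * enorm3 x := by
  rw [enorm3_eq_norm, enorm3_eq_norm, ← toEuclideanCLM_toLp]
  exact (toEuclideanCLM (𝕜 := ℝ) A).le_opNorm _

lemma enorm3_le_of_mem_cyl {r L : ℝ} (hr : 0 ≤ r) (hrL : r ≤ L) {x : Fin 3 → ℝ}
    (hx : x ∈ cyl r L) : enorm3 x ≤ 2 * L := by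
  obtain ⟨h0, hL, hdisc⟩ := hx
  refine sqrt_le_iff.2 ⟨by linarith, ?_⟩
  rw [Fin.sum_univ_three]
  nlinarith [mul_le_mul hL hL h0 (h0.trans hL), mul_le_mul hrL hrL hr (hr.trans hrL)]

lemma enorm3_mulVec_add_sub_le (A : Matrix (Fin 3) (Fin 3) ℝ) (b : Fin 3 → ℝ) {r L : ℝ}
    (hr : 0 ≤ r) (hrL : r ≤ L) {x : Fin 3 → ℝ} (hx : x ∈ cyl r L) :
    enorm3 (A *ᵥ x + b - x) ≤ enorm3 b + 2 * L * opNorm3 (A - 1) := by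
  have hA : 0 ≤ opNorm3 (A - 1) := by unfold opNorm3; positivity
  calc enorm3 (A *ᵥ x + b - x) = enorm3 ((A - 1) *ᵥ x + b) := by
        rw [sub_mulVec, one_mulVec, sub_add_eq_add_sub]
    _ ≤ opNorm3 (A - 1) * enorm3 x + enorm3 b :=
        (enorm3_add_le _ _).trans (by gcongr; exact enorm3_mulVec_le _ _)
    _ ≤ enorm3 b + 2 * L * opNorm3 (A - 1) := by
        nlinarith [enorm3_le_of_mem_cyl hr hrL hx]

lemma mem_cylIcc_of_enorm3_sub_le {a b ρ d : ℝ} (hρ : 0 ≤ ρ) {x y : Fin 3 → ℝ}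
    (hx : x ∈ cylIcc a b ρ) (hy : enorm3 (y - x) ≤ d) : y ∈ cylIcc (a - d) (b + d) (ρ + d) := by
  obtain ⟨ha, hb, hdisc⟩ := hx
  have hd : 0 ≤ d := (enorm3_nonneg _).trans hy
  have hv : (y 0 - x 0) ^ 2 + (y 1 - x 1) ^ 2 + (y 2 - x 2) ^ 2 ≤ d ^ 2 := by
    have h := sq_enorm3 (y - x)
    simp only [Pi.sub_apply] at h
    nlinarith [enorm3_nonneg (y - x)]
  have h0 := abs_le_of_sq_le_sq' (a := y 0 - x 0) (by nlinarith) hd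
  have hv12 : (y 1 - x 1) ^ 2 + (y 2 - x 2) ^ 2 ≤ d ^ 2 := by nlinarith
  have hcross : x 1 * (y 1 - x 1) + x 2 * (y 2 - x 2) ≤ ρ * d := by
    refine (abs_le_of_sq_le_sq' ?_ (by positivity)).2
    nlinarith [sq_nonneg (x 1 * (y 2 - x 2) - x 2 * (y 1 - x 1)),
      mul_le_mul hdisc hv12 (by positivity) (by positivity)]
  refine ⟨by linarith, by linarith, ?_⟩
  nlinarith

lemma cyl_shell_bound {r L d : ℝ} (hr : 0 ≤ r) (hrL : r ≤ L) (hd : 0 ≤ d) (hdr : d ≤ r) :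
    (r + d) ^ 2 * (L + 2 * d) - r ^ 2 * L ≤ 11 * r * L * d := by
  have hrd : 0 ≤ r * d := mul_nonneg hr hd
  nlinarith [mul_le_mul_of_nonneg_left hrL hrd, mul_le_mul_of_nonneg_left (hdr.trans hrL) hrd,
    mul_le_mul_of_nonneg_left hdr (mul_nonneg (hd.trans (hdr.trans hrL)) hd),
    mul_le_mul hdr (hdr.trans hrL) hd hr, mul_le_mul_of_nonneg_left hdr hd]

lemma volume_cyl {r : ℝ} (hr : 0 ≤ r) (L : ℝ) :
    volume (cyl r L) = ENNReal.ofReal (π * r ^ 2 * L) := by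
  rw [cyl_eq_cylIcc, volume_cylIcc _ _ hr, sub_zero]

lemma volume_sdiff_cyl_le {r L d : ℝ} (hr : 0 ≤ r) (hrL : r ≤ L) (hd : 0 ≤ d)
    {t : Set (Fin 3 → ℝ)} (ht : t ⊆ cylIcc (-d) (L + d) (r + d))
    (hvol : volume t ≤ volume (cyl r L)) :
    volume (t \ cyl r L) ≤ ENNReal.ofReal (11 * π * r * L * d) := by
  have hL : 0 ≤ L := hr.trans hrL
  rcases le_or_gt d r with hdr | hrd
  · have hsub : cyl r L ⊆ cylIcc (-d) (L + d) (r + d) := fun x hx => by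
      simpa using mem_cylIcc_of_enorm3_sub_le (y := x) hr hx (by simpa [enorm3] using hd)
    calc volume (t \ cyl r L) ≤ volume (cylIcc (-d) (L + d) (r + d) \ cyl r L) :=
          measure_mono (sdiff_subset_sdiff_left ht)
      _ = ENNReal.ofReal (π * (r + d) ^ 2 * (L + d - -d) - π * r ^ 2 * L) := by
          rw [measure_sdiff hsub (measurableSet_cylIcc 0 L r).nullMeasurableSet
              (by simp [volume_cyl hr]),
            volume_cylIcc _ _ (by positivity), volume_cyl hr,
            ENNReal.ofReal_sub _ (by positivity)]
      _ ≤ ENNReal.ofReal (11 * π * r * L * d) := ENNReal.ofReal_le_ofReal <| by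
          nlinarith [mul_le_mul_of_nonneg_left (cyl_shell_bound hr hrL hd hdr) pi_pos.le]
  · calc volume (t \ cyl r L) ≤ volume (cyl r L) := (measure_mono sdiff_subset).trans hvol
      _ ≤ ENNReal.ofReal (11 * π * r * L * d) := by
          rw [volume_cyl hr]
          refine ENNReal.ofReal_le_ofReal ?_
          nlinarith [mul_le_mul_of_nonneg_left hrd.le (mul_nonneg (mul_nonneg pi_pos.le hr) hL)]

/-- Change of a fibre under a small rigid motion: a universal constant `C > 0` such that
for `0 < r ≤ L`, any orthogonal `Q` and any `b ∈ ℝ³`, the Lebesgue measure of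
`C(r,L) Δ (Q C(r,L) + b)` is at most `C r L (|b| + L ‖Q − I‖)`. -/
theorem stmt_7 :
    ∃ C : ℝ, 0 < C ∧
      ∀ (r L : ℝ), 0 < r → r ≤ L →
        ∀ Q : Matrix (Fin 3) (Fin 3) ℝ, Qᵀ * Q = 1 →
          ∀ b : Fin 3 → ℝ,
            volume (symmDiff (cyl r L) ((fun x => Q.mulVec x + b) '' cyl r L)) ≤
              ENNReal.ofReal (C * r * L * (enorm3 b + L * opNorm3 (Q - 1))) := by
  refine ⟨44 * π, by positivity, fun r L hr hrL Q hQ b => ?_⟩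
  have hL : 0 ≤ L := hr.le.trans hrL
  have hnorm : 0 ≤ opNorm3 (Q - 1) := by unfold opNorm3; positivity
  set φ := fun x => Q *ᵥ x + b
  set d := enorm3 b + 2 * L * opNorm3 (Q - 1)
  have hd : 0 ≤ d := add_nonneg (enorm3_nonneg b) (mul_nonneg (by positivity) hnorm)
  have hA : MeasurableSet (cyl r L) := measurableSet_cylIcc 0 L r
  have hvol : volume (φ '' cyl r L) = volume (cyl r L) := volume_image_mulVec_add hQ b _
  have hshell : φ '' cyl r L ⊆ cylIcc (-d) (L + d) (r + d) := by
    rintro _ ⟨x, hx, rfl⟩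
    have h := mem_cylIcc_of_enorm3_sub_le hr.le hx (enorm3_mulVec_add_sub_le Q b hr.le hrL hx)
    rwa [zero_sub] at h
  calc volume (symmDiff (cyl r L) (φ '' cyl r L)) = 2 * volume (φ '' cyl r L \ cyl r L) :=
        measure_symmDiff_eq_two_mul_sdiff hA.nullMeasurableSet
          (hA.image_mulVec_add hQ b).nullMeasurableSet hvol.symm (by simp [volume_cyl hr.le])
    _ ≤ 2 * ENNReal.ofReal (11 * π * r * L * d) := by
        gcongr
        exact volume_sdiff_cyl_le hr.le hrL hd hshell hvol.le
    _ ≤ ENNReal.ofReal (44 * π * r * L * (enorm3 b + L * opNorm3 (Q - 1))) := by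
        rw [← ENNReal.ofReal_ofNat, ← ENNReal.ofReal_mul zero_le_two]
        refine ENNReal.ofReal_le_ofReal ?_
        nlinarith [mul_nonneg (mul_nonneg (mul_nonneg pi_pos.le hr.le) hL) (enorm3_nonneg b)]
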